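/- Define the following subsets of ℝ²: J = {(X, Y) : X > Y, 5/6 < X + 2Y, X + Y < 5/6}; M_1 = {(X, Y) : X > Y, 5/6 < X + 2Y ≤ 1, X + Y < 5/6}; M_2 = {(X, Y) : X ≤ 2/3, Y < 1/5, 5/6 − 1/9 ≤ X + Y < 5/6}; M_3 = {(X, Y) : X ≤ 7/11, Y < 1/4, 5/6 − 1/11 ≤ X + Y < 5/6}; M_4 = {(X, Y) : X ≤ 7/12, Y < 1/3, 5/6 − 1/12 ≤ X + Y < 5/6}; M_5 = {(X, Y) : X < 1/2, Y ≤ 1/3, 5/6 − 1/6 ≤ X + Y < 5/6}; M_6 = {(X, Y) : X < 1/2, Y ≤ 5/12, 5/6 − 1/12 ≤ X + Y < 5/6}; M_7 = {(X, Y) : X ≤ 5/12, Y ≤ 5/12, 5/6 − 1/6 ≤ X + Y < 5/6}. Then J ⊆ M_1 ∪ M_2 ∪ M_3 ∪ M_4 ∪ M_5 ∪ M_6 ∪ M_7. -/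
import Mathlib


theorem region_inclusion :
    {p : ℝ × ℝ | p.1 > p.2 ∧ 5 / 6 < p.1 + 2 * p.2 ∧ p.1 + p.2 < 5 / 6} ⊆
      {p : ℝ × ℝ | p.1 > p.2 ∧ 5 / 6 < p.1 + 2 * p.2 ∧ p.1 + 2 * p.2 ≤ 1 ∧
        p.1 + p.2 < 5 / 6} ∪
      {p : ℝ × ℝ | p.1 ≤ 2 / 3 ∧ p.2 < 1 / 5 ∧ 5 / 6 - 1 / 9 ≤ p.1 + p.2 ∧
        p.1 + p.2 < 5 / 6} ∪
      {p : ℝ × ℝ | p.1 ≤ 7 / 11 ∧ p.2 < 1 / 4 ∧ 5 / 6 - 1 / 11 ≤ p.1 + p.2 ∧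
        p.1 + p.2 < 5 / 6} ∪
      {p : ℝ × ℝ | p.1 ≤ 7 / 12 ∧ p.2 < 1 / 3 ∧ 5 / 6 - 1 / 12 ≤ p.1 + p.2 ∧
        p.1 + p.2 < 5 / 6} ∪
      {p : ℝ × ℝ | p.1 < 1 / 2 ∧ p.2 ≤ 1 / 3 ∧ 5 / 6 - 1 / 6 ≤ p.1 + p.2 ∧
        p.1 + p.2 < 5 / 6} ∪
      {p : ℝ × ℝ | p.1 < 1 / 2 ∧ p.2 ≤ 5 / 12 ∧ 5 / 6 - 1 / 12 ≤ p.1 + p.2 ∧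
        p.1 + p.2 < 5 / 6} ∪
      {p : ℝ × ℝ | p.1 ≤ 5 / 12 ∧ p.2 ≤ 5 / 12 ∧ 5 / 6 - 1 / 6 ≤ p.1 + p.2 ∧
        p.1 + p.2 < 5 / 6} := by
  rintro ⟨x, y⟩ ⟨h1, h2, h3⟩
  simp only [Set.mem_union, Set.mem_setOf_eq] at *
  -- y bounds
  have hy5 : y < 5 / 12 := by linarith
  rcases le_or_gt (x + 2 * y) 1 with h4 | h4
  · -- M1
    exact Or.inl (Or.inl (Or.inl (Or.inl (Or.inl (Or.inl ⟨h1, h2, h4, h3⟩)))))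
  have hy6 : (1:ℝ) / 6 < y := by linarith
  rcases lt_or_ge x (1 / 2) with hx | hx
  · rcases le_or_gt y (1 / 3) with hy | hy
    · -- M5
      have : x < 1 / 2 ∧ y ≤ 1 / 3 ∧ 5 / 6 - 1 / 6 ≤ x + y ∧ x + y < 5 / 6 :=
        ⟨hx, hy, by linarith, h3⟩
      exact Or.inl (Or.inl (Or.inr this))
    · rcases le_or_gt x (5 / 12) with hx2 | hx2
      · -- M7
        have : x ≤ 5 / 12 ∧ y ≤ 5 / 12 ∧ 5 / 6 - 1 / 6 ≤ x + y ∧ x + y < 5 / 6 :=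
          ⟨hx2, le_of_lt hy5, by linarith, h3⟩
        exact Or.inr this
      · -- M6
        have : x < 1 / 2 ∧ y ≤ 5 / 12 ∧ 5 / 6 - 1 / 12 ≤ x + y ∧ x + y < 5 / 6 :=
          ⟨hx, le_of_lt hy5, by linarith, h3⟩
        exact Or.inl (Or.inr this)
  · rcases le_or_gt x (7 / 12) with hx2 | hx2
    · -- M4
      have hs : 5 / 6 - 1 / 12 ≤ x + y := by
        rcases le_or_gt y (1 / 4) with hy | hy <;> linarith
      have : x ≤ 7 / 12 ∧ y < 1 / 3 ∧ 5 / 6 - 1 / 12 ≤ x + y ∧ x + y < 5 / 6 :=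
        ⟨hx2, by linarith, hs, h3⟩
      exact Or.inl (Or.inl (Or.inl (Or.inr this)))
    · rcases le_or_gt x (7 / 11) with hx3 | hx3
      · -- M3
        have : x ≤ 7 / 11 ∧ y < 1 / 4 ∧ 5 / 6 - 1 / 11 ≤ x + y ∧ x + y < 5 / 6 :=
          ⟨hx3, by linarith, by linarith, h3⟩
        exact Or.inl (Or.inl (Or.inl (Or.inl (Or.inr this))))
      · rcases le_or_gt x (2 / 3) with hx4 | hx4
        · -- M2
          have : x ≤ 2 / 3 ∧ y < 1 / 5 ∧ 5 / 6 - 1 / 9 ≤ x + y ∧ x + y < 5 / 6 :=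
            ⟨hx4, by linarith, by linarith, h3⟩
          exact Or.inl (Or.inl (Or.inl (Or.inl (Or.inl (Or.inr this)))))
        · exact absurd hy6 (by linarith)
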